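/- With g and ↶ as above, the bracket ⟦x, y⟧ := x ↶ y − y ↶ x + [x, y] satisfies the Jacobi identity and antisymmetry, i.e., (g, ⟦−,−⟧) is a Lie algebra (the derived Lie algebra of the post-Lie algebra). -/

import Mathlib

/-- Words over the alphabet X = {x₀, x₁}, encoded as lists of booleans
(`false` ↔ x₀, `true` ↔ x₁). -/
abbrev Word : Type := List Bool

/-- Noncommutative formal power series over X with real coefficients. -/
abbrev Series : Type := Word → ℝ

/-- Auxiliary recursion computing the coefficient of the shuffle product. -/
def sh : Word → Series → Series → ℝ
  | [], c, d => c [] * d []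
  | a :: w, c, d => sh w (fun u => c (a :: u)) d + sh w c (fun u => d (a :: u))

/-- The shuffle product of two series. -/
def shuffle (c d : Series) : Series := fun w => sh w c d

/-- Left concatenation by the letter x₀. -/
def X0f (c : Series) : Series := fun w =>
  match w with
  | false :: w' => c w'
  | _ => 0

/-- Left concatenation by the letter x₁. -/
def X1f (c : Series) : Series := fun w =>
  match w with
  | true :: w' => c w'
  | _ => 0

/-- The indicator series of a word. -/
def deltaW (η : Word) : Series := fun w => if w = η then 1 else 0

/-- The shuffle unit 1∅. -/
def oneS : Series := deltaW []

/-- Mixed composition product of a word with a pair of series: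
∅ ∘̃ z = ∅, (x₀η) ∘̃ z = x₀(η ∘̃ z),
(x₁η) ∘̃ z = x₁(z₁ ⧢ (η ∘̃ z)) + x₀(z₂ ⧢ (η ∘̃ z)). -/
def wmix : Word → Series × Series → Series
  | [], _ => oneS
  | false :: η, z => X0f (wmix η z)
  | true :: η, z => X1f (shuffle z.1 (wmix η z)) + X0f (shuffle z.2 (wmix η z))

/-- Mixed composition product `c ∘̃ z`, extended linearly in the left argument.
(Since `wmix η z` vanishes on words shorter than `η`, the sum may be truncated.) -/
def mixcomp (c : Series) (z : Series × Series) : Series := fun w =>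
  ∑ n ∈ Finset.range (w.length + 1), ∑ f : Fin n → Bool,
    c (List.ofFn f) * wmix (List.ofFn f) z w

/-- Composition product of a word with a series:
∅ ∘ d = ∅, (x₀η) ∘ d = x₀(η ∘ d), (x₁η) ∘ d = x₀(d ⧢ (η ∘ d)). -/
def wcomp : Word → Series → Series
  | [], _ => oneS
  | false :: η, d => X0f (wcomp η d)
  | true :: η, d => X0f (shuffle d (wcomp η d))

/-- Composition product `c ∘ d`, extended linearly in the left argument. -/
def compP (c d : Series) : Series := fun w =>
  ∑ n ∈ Finset.range (w.length + 1), ∑ f : Fin n → Bool,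
    c (List.ofFn f) * wcomp (List.ofFn f) d w

/-- The group product on G: (c₁,c₂)·(d₁,d₂) = (c₁ ⧢ d₁, c₂ + c₁ ⧢ d₂). -/
def gmul (c d : Series × Series) : Series × Series :=
  (shuffle c.1 d.1, c.2 + shuffle c.1 d.2)

/-- The identity element e = (1∅, 0) of G. -/
def geId : Series × Series := (oneS, 0)

/-- Shuffle powers. -/
def shPow (c : Series) : ℕ → Series
  | 0 => oneS
  | n + 1 => shuffle c (shPow c n)

/-- Shuffle inverse of a series with constant coefficient 1, via the
geometric series c^{⧢ -1} = Σ_k (1∅ - c)^{⧢ k} (truncated by word length,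
which is exact since 1∅ - c is proper). -/
def shInv (c : Series) : Series := fun w =>
  ∑ k ∈ Finset.range (w.length + 1), shPow (oneS - c) k w

/-- The group inverse in (G,·). -/
def ginv (c : Series × Series) : Series × Series :=
  (shInv c.1, -(shuffle (shInv c.1) c.2))

/-- The product ◁ on G, componentwise mixed composition. -/
def triOp (c d : Series × Series) : Series × Series :=
  (mixcomp c.1 d, mixcomp c.2 d)

/-- The Grossman–Larson product c ⋆ d = (c ◁ d) · d. -/
def starOp (c d : Series × Series) : Series × Series := gmul (triOp c d) d

/-- The Lie bracket on pairs: [(u₁,u₂),(v₁,v₂)] = (0, u₁ ⧢ v₂ - v₁ ⧢ u₂). -/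
def bracketG (u v : Series × Series) : Series × Series :=
  (0, shuffle u.1 v.2 - shuffle v.1 u.2)

/-- η e₁ = (η, 0). -/
def e1 (η : Word) : Series × Series := (deltaW η, 0)

/-- η e₂ = (0, η). -/
def e2 (η : Word) : Series × Series := (0, deltaW η)

/-- Post-Lie product of a word (appearing as η eᵢ) against ζ e₁ (right
argument in the e₁ component), producing the series carried in the eᵢ slot:
∅ ↶ ζe₁ = 0, (x₀η) ↶ ζe₁ = x₀(η ↶ ζe₁), (x₁η) ↶ ζe₁ = x₁(η ↶ ζe₁) + x₁(η ⧢ ζ). -/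
def pw1 : Word → Series → Series
  | [], _ => 0
  | false :: η, ζ => X0f (pw1 η ζ)
  | true :: η, ζ => X1f (pw1 η ζ) + X1f (shuffle (deltaW η) ζ)

/-- Post-Lie product against ζ e₂:
∅ ↶ ζe₂ = 0, (x₀η) ↶ ζe₂ = x₀(η ↶ ζe₂), (x₁η) ↶ ζe₂ = x₁(η ↶ ζe₂) + x₀(η ⧢ ζ). -/
def pw2 : Word → Series → Series
  | [], _ => 0
  | false :: η, ζ => X0f (pw2 η ζ)
  | true :: η, ζ => X1f (pw2 η ζ) + X0f (shuffle (deltaW η) ζ)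

/-- The post-Lie product ↶ on g, bilinear extension of the word-level rules. -/
def postL (u v : Series × Series) : Series × Series :=
  (fun w => ∑ n ∈ Finset.range (w.length + 1), ∑ f : Fin n → Bool,
      u.1 (List.ofFn f) * (pw1 (List.ofFn f) v.1 + pw2 (List.ofFn f) v.2) w,
   fun w => ∑ n ∈ Finset.range (w.length + 1), ∑ f : Fin n → Bool,
      u.2 (List.ofFn f) * (pw1 (List.ofFn f) v.1 + pw2 (List.ofFn f) v.2) w)

/-- Componentwise left concatenation by x₀. -/
def X0p (p : Series × Series) : Series × Series := (X0f p.1, X0f p.2)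

/-- Componentwise left concatenation by x₁. -/
def X1p (p : Series × Series) : Series × Series := (X1f p.1, X1f p.2)

/-- The derived Lie bracket ⟦x,y⟧ = x ↶ y - y ↶ x + [x,y]. -/
def dbr (x y : Series × Series) : Series × Series :=
  postL x y - postL y x + bracketG x y

/-!
Coefficientwise, the left quotients of `c ↶ z` satisfy
`a⁻¹(c ↶ z) = (a⁻¹c) ↶ z + (x₁⁻¹c) ⧢ z_a`, where `z_a` is `z₁` for `a = x₁` and `z₂` for `a = x₀`.
By induction on the length of the word read off, this makes `· ↶ z` a derivation of the shuffle
product and gives `c ↶ [y, z] = a(c, y, z) - a(c, z, y)` for the associator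
`a(c, y, z) = (c ↶ y) ↶ z - c ↶ (y ↶ z)`. With the Jacobi identity for `[·, ·]`, which comes from
the commutativity and associativity of `⧢`, these are the axioms of a post-Lie algebra, and the
derived bracket of any post-Lie algebra is a Lie bracket.
-/

def AddMonoidHom.mk₂ {M N P : Type*} [AddZeroClass M] [AddZeroClass N] [AddCommGroup P]
    (f : M → N → P) (h₁ : ∀ m m' n, f (m + m') n = f m n + f m' n)
    (h₂ : ∀ m n n', f m (n + n') = f m n + f m n') : M →+ N →+ P :=
  AddMonoidHom.mk' (fun m => AddMonoidHom.mk' (f m) (h₂ m)) fun m m' =>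
    AddMonoidHom.ext (h₁ m m')

section PostLie

variable {M : Type*} [AddCommGroup M] (B T : M →+ M →+ M)

def derivedBracket (x y : M) : M := T x y - T y x + B x y

variable {B T}

theorem derivedBracket_swap (hB : ∀ x y, B x y = -B y x) (x y : M) :
    derivedBracket B T x y = -derivedBracket B T y x := by
  rw [derivedBracket, derivedBracket, hB x y]
  abel

theorem derivedBracket_jacobi (hB : ∀ x y, B x y = -B y x)
    (hB_jacobi : ∀ x y z, B (B x y) z + B (B y z) x + B (B z x) y = 0)
    (hT_B : ∀ x y z, T (B x y) z = B (T x z) y + B x (T y z))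
    (hT_post : ∀ x y z, T x (B y z) = T (T x y) z - T x (T y z) - (T (T x z) y - T x (T z y)))
    (x y z : M) :
    derivedBracket B T (derivedBracket B T x y) z + derivedBracket B T (derivedBracket B T y z) x
      + derivedBracket B T (derivedBracket B T z x) y = 0 := by
  simp only [derivedBracket, map_add, map_sub, AddMonoidHom.add_apply, AddMonoidHom.sub_apply,
    hT_B, hT_post]
  rw [hB x (T y z), hB y (T z x), hB z (T x y)]
  linear_combination (norm := abel) hB_jacobi x y z

end PostLie

def leftQuot (a : Bool) (c : Series) : Series := fun u => c (a :: u)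

lemma shuffle_nil (c d : Series) : shuffle c d [] = c [] * d [] := rfl

lemma shuffle_cons (a : Bool) (w : Word) (c d : Series) :
    shuffle c d (a :: w) = shuffle (leftQuot a c) d w + shuffle c (leftQuot a d) w := rfl

lemma leftQuot_shuffle (a : Bool) (c d : Series) :
    leftQuot a (shuffle c d) = shuffle (leftQuot a c) d + shuffle c (leftQuot a d) := rfl

lemma leftQuot_add (a : Bool) (c d : Series) :
    leftQuot a (c + d) = leftQuot a c + leftQuot a d := rfl

lemma leftQuot_smul (a : Bool) (r : ℝ) (c : Series) :
    leftQuot a (r • c) = r • leftQuot a c := rfl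

lemma shuffle_comm (c d : Series) : shuffle c d = shuffle d c := by
  funext w
  induction w generalizing c d with
  | nil => exact mul_comm _ _
  | cons a w ih => rw [shuffle_cons, shuffle_cons, ih, ih (leftQuot a d), add_comm]

lemma shuffle_add_left (c c' d : Series) :
    shuffle (c + c') d = shuffle c d + shuffle c' d := by
  funext w
  induction w generalizing c c' d with
  | nil => exact add_mul _ _ _
  | cons a w ih =>
    simp only [shuffle_cons, leftQuot_add, ih, Pi.add_apply]
    ring

lemma shuffle_smul_left (r : ℝ) (c d : Series) : shuffle (r • c) d = r • shuffle c d := by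
  funext w
  induction w generalizing c d with
  | nil => exact mul_assoc _ _ _
  | cons a w ih =>
    simp only [shuffle_cons, leftQuot_smul, ih, Pi.smul_apply, smul_eq_mul]
    ring

lemma shuffle_add_right (c d d' : Series) :
    shuffle c (d + d') = shuffle c d + shuffle c d' := by
  rw [shuffle_comm, shuffle_add_left, shuffle_comm d, shuffle_comm d']

def shuffleₗ : Series →ₗ[ℝ] Series →ₗ[ℝ] Series :=
  LinearMap.mk₂ ℝ shuffle shuffle_add_left shuffle_smul_left shuffle_add_right
    fun r c d => by rw [shuffle_comm, shuffle_smul_left, shuffle_comm]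

lemma shuffleₗ_apply (c d : Series) : shuffleₗ c d = shuffle c d := rfl

lemma shuffle_zero_left (d : Series) : shuffle 0 d = 0 :=
  shuffleₗ.map_zero₂ d

lemma shuffle_sub_right (c d d' : Series) :
    shuffle c (d - d') = shuffle c d - shuffle c d' :=
  (shuffleₗ c).map_sub d d'

lemma shuffle_assoc (c d e : Series) : shuffle (shuffle c d) e = shuffle c (shuffle d e) := by
  funext w
  induction w generalizing c d e with
  | nil => exact mul_assoc _ _ _
  | cons a w ih =>
    simp only [shuffle_cons, leftQuot_shuffle, shuffle_add_left, shuffle_add_right, Pi.add_apply,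
      ih]
    ring

lemma shuffle_left_comm (c d e : Series) :
    shuffle c (shuffle d e) = shuffle d (shuffle c e) := by
  rw [← shuffle_assoc, shuffle_comm c, shuffle_assoc]

lemma shuffle_right_comm (c d e : Series) :
    shuffle (shuffle c d) e = shuffle (shuffle c e) d := by
  rw [shuffle_assoc, shuffle_comm d, ← shuffle_assoc]

lemma shuffle_congr_of_length_le {c c' : Series} (d : Series) {w : Word}
    (h : ∀ u : Word, u.length ≤ w.length → c u = c' u) : shuffle c d w = shuffle c' d w := by
  induction w generalizing c c' d with
  | nil => rw [shuffle_nil, shuffle_nil, h [] le_rfl]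
  | cons a w ih =>
    rw [shuffle_cons, shuffle_cons,
      ih (c := leftQuot a c) (c' := leftQuot a c') d fun u hu => h (a :: u) (Nat.succ_le_succ hu),
      ih (leftQuot a d) fun u hu => h u (hu.trans (Nat.le_succ _))]

def wordSum (N : ℕ) (F : Word → ℝ) : ℝ :=
  ∑ n ∈ Finset.range (N + 1), ∑ f : Fin n → Bool, F (List.ofFn f)

lemma wordSum_add (N : ℕ) (F G : Word → ℝ) :
    wordSum N (fun η => F η + G η) = wordSum N F + wordSum N G := by
  simp only [wordSum, Finset.sum_add_distrib]

lemma wordSum_succ (N : ℕ) (F : Word → ℝ) :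
    wordSum (N + 1) F = F [] + wordSum N fun η => F (false :: η) + F (true :: η) := by
  rw [wordSum, Finset.sum_range_succ', add_comm]
  congr 1
  · simp
  refine Finset.sum_congr rfl fun n _ => ?_
  rw [← (Fin.consEquiv fun _ : Fin (n + 1) => Bool).sum_comp, Fintype.sum_prod_type,
    Fintype.sum_bool, add_comm, ← Finset.sum_add_distrib]
  simp [Fin.consEquiv, List.ofFn_succ]

lemma sum_ofFn_mul_deltaW (n : ℕ) (c : Series) (u : Word) :
    ∑ f : Fin n → Bool, c (List.ofFn f) * deltaW (List.ofFn f) u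
      = if u.length = n then c u else 0 := by
  split_ifs with h
  · subst h
    rw [Fintype.sum_eq_single u.get]
    · simp [deltaW]
    · intro f hf
      have hne : u ≠ List.ofFn f := fun e =>
        hf (List.ofFn_inj.mp (by rw [List.ofFn_get, ← e])).symm
      simp [deltaW, hne]
  · refine Finset.sum_eq_zero fun f _ => ?_
    have hne : u ≠ List.ofFn f := fun e => h (by rw [e, List.length_ofFn])
    simp [deltaW, hne]

lemma wordSum_mul_deltaW {N : ℕ} {u : Word} (hu : u.length ≤ N) (c : Series) :
    wordSum N (fun η => c η * deltaW η u) = c u := by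
  simp [wordSum, sum_ofFn_mul_deltaW, Nat.lt_succ_iff.mpr hu]

lemma wordSum_mul_shuffle_deltaW (c d : Series) (w : Word) :
    wordSum w.length (fun η => c η * shuffle (deltaW η) d w) = shuffle c d w := by
  have htrunc : shuffle c d w
      = shuffle (∑ n ∈ Finset.range (w.length + 1), ∑ f : Fin n → Bool,
          c (List.ofFn f) • deltaW (List.ofFn f)) d w := by
    refine shuffle_congr_of_length_le d fun u hu => ?_
    rw [← wordSum_mul_deltaW hu c]
    simp [wordSum, Finset.sum_apply]
  rw [htrunc, ← shuffleₗ_apply]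
  simp [wordSum, map_sum, map_smul, Finset.sum_apply, shuffleₗ_apply]

def postS (c : Series) (z : Series × Series) : Series := fun w =>
  wordSum w.length fun η => c η * (pw1 η z.1 + pw2 η z.2) w

lemma postL_eq (u v : Series × Series) : postL u v = (postS u.1 v, postS u.2 v) := rfl

lemma postS_nil (c : Series) (z : Series × Series) : postS c z [] = 0 := by
  simp [postS, wordSum, pw1, pw2]

lemma postS_cons (a : Bool) (w : Word) (c : Series) (z : Series × Series) :
    postS c z (a :: w)
      = postS (leftQuot a c) z w + shuffle (leftQuot true c) (cond a z.1 z.2) w := by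
  rw [postS, List.length_cons, wordSum_succ, ← wordSum_mul_shuffle_deltaW, postS, ← wordSum_add]
  simp only [pw1, pw2, Pi.add_apply, Pi.zero_apply, add_zero, mul_zero, zero_add, leftQuot]
  congr 1 with η
  cases a
  · simp [X0f, X1f]
  · simp [X0f, X1f]
    ring

lemma leftQuot_postS (a : Bool) (c : Series) (z : Series × Series) :
    leftQuot a (postS c z)
      = postS (leftQuot a c) z + shuffle (leftQuot true c) (cond a z.1 z.2) :=
  funext fun w => postS_cons a w c z

lemma postS_add_left (c c' : Series) (z : Series × Series) :
    postS (c + c') z = postS c z + postS c' z := by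
  funext w
  simp only [postS, Pi.add_apply, add_mul, wordSum_add]

lemma postS_sub_left (c c' : Series) (z : Series × Series) :
    postS (c - c') z = postS c z - postS c' z := by
  funext w
  simp only [postS, wordSum, Pi.sub_apply, sub_mul, Finset.sum_sub_distrib]

lemma postS_zero_left (z : Series × Series) : postS 0 z = 0 := by
  funext w
  simp [postS, wordSum]

lemma postS_add_right (c : Series) (z z' : Series × Series) :
    postS c (z + z') = postS c z + postS c z' := by
  funext w
  induction w generalizing c with
  | nil => simp [postS_nil]
  | cons a w ih =>
    simp only [postS_cons, Pi.add_apply, ih]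
    have hz : cond a (z + z').1 (z + z').2 = cond a z.1 z.2 + cond a z'.1 z'.2 := by cases a <;> rfl
    rw [hz, shuffle_add_right, Pi.add_apply]
    ring

lemma postS_shuffle (c₁ c₂ : Series) (z : Series × Series) :
    postS (shuffle c₁ c₂) z = shuffle (postS c₁ z) c₂ + shuffle c₁ (postS c₂ z) := by
  funext w
  induction w generalizing c₁ c₂ with
  | nil => simp [postS_nil, shuffle_nil]
  | cons a w ih =>
    simp only [postS_cons, shuffle_cons, leftQuot_shuffle, leftQuot_postS, postS_add_left,
      shuffle_add_left, shuffle_add_right, Pi.add_apply, ih]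
    rw [shuffle_right_comm (leftQuot true c₁) c₂, shuffle_assoc c₁]
    ring

lemma cond_postL (a : Bool) (y z : Series × Series) :
    cond a (postL y z).1 (postL y z).2 = postS (cond a y.1 y.2) z := by
  cases a <;> rfl

lemma cond_bracketG (a : Bool) (y z : Series × Series) :
    cond a (bracketG y z).1 (bracketG y z).2
      = shuffle y.1 (cond a z.1 z.2) - shuffle z.1 (cond a y.1 y.2) := by
  cases a
  · rfl
  · simp [bracketG, shuffle_comm y.1]

lemma postS_bracketG (c : Series) (y z : Series × Series) :
    postS c (bracketG y z)
      = postS (postS c y) z - postS c (postL y z)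
        - (postS (postS c z) y - postS c (postL z y)) := by
  funext w
  induction w generalizing c with
  | nil => simp [postS_nil]
  | cons a w ih =>
    simp only [postS_cons, Pi.sub_apply, Pi.add_apply, cond_bracketG, cond_postL, leftQuot_postS,
      postS_add_left, postS_shuffle, shuffle_add_left, shuffle_sub_right, cond_true, ih]
    rw [shuffle_assoc (leftQuot true c) y.1, shuffle_assoc (leftQuot true c) z.1]
    ring

lemma bracketG_swap (x y : Series × Series) : bracketG x y = -bracketG y x :=
  Prod.ext neg_zero.symm (neg_sub _ _).symm

lemma bracketG_add_left (u u' v : Series × Series) :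
    bracketG (u + u') v = bracketG u v + bracketG u' v := by
  simp only [bracketG, Prod.fst_add, Prod.snd_add, shuffle_add_left, shuffle_add_right,
    Prod.mk_add_mk, add_zero]
  congr 1
  abel

lemma bracketG_add_right (u v v' : Series × Series) :
    bracketG u (v + v') = bracketG u v + bracketG u v' := by
  rw [bracketG_swap, bracketG_add_left, neg_add, ← bracketG_swap, ← bracketG_swap]

lemma bracketG_jacobi (x y z : Series × Series) :
    bracketG (bracketG x y) z + bracketG (bracketG y z) x + bracketG (bracketG z x) y = 0 := by
  refine Prod.ext (by simp [bracketG]) ?_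
  simp only [bracketG, Prod.snd_add, shuffle_zero_left, shuffle_sub_right, Prod.snd_zero]
  rw [shuffle_left_comm z.1 x.1, shuffle_left_comm z.1 y.1, shuffle_left_comm x.1 y.1]
  abel

lemma postL_add_left (u u' v : Series × Series) : postL (u + u') v = postL u v + postL u' v := by
  simp only [postL_eq, Prod.fst_add, Prod.snd_add, postS_add_left, Prod.mk_add_mk]

lemma postL_add_right (u v v' : Series × Series) : postL u (v + v') = postL u v + postL u v' := by
  simp only [postL_eq, postS_add_right, Prod.mk_add_mk]

def postLHom : (Series × Series) →+ (Series × Series) →+ Series × Series :=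
  AddMonoidHom.mk₂ postL postL_add_left postL_add_right

def bracketGHom : (Series × Series) →+ (Series × Series) →+ Series × Series :=
  AddMonoidHom.mk₂ bracketG bracketG_add_left bracketG_add_right

lemma postL_bracketG_left (x y z : Series × Series) :
    postL (bracketG x y) z = bracketG (postL x z) y + bracketG x (postL y z) := by
  refine Prod.ext (by simp [postL_eq, bracketG, postS_zero_left]) ?_
  simp only [postL_eq, bracketG, Prod.snd_add, postS_sub_left, postS_shuffle]
  abel

lemma postL_bracketG_right (x y z : Series × Series) :
    postL x (bracketG y z)
      = postL (postL x y) z - postL x (postL y z) - (postL (postL x z) y - postL x (postL z y)) :=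
  Prod.ext (postS_bracketG x.1 y z) (postS_bracketG x.2 y z)

/-- the derived bracket ⟦x,y⟧ = x ↶ y - y ↶ x + [x,y] is
antisymmetric and satisfies the Jacobi identity, i.e. (g, ⟦-,-⟧) is a Lie
algebra. -/
theorem derived_bracket_lie :
    (∀ x y : Series × Series, x.1 [] = 0 → y.1 [] = 0 →
      dbr x y = -dbr y x) ∧
    (∀ x y z : Series × Series, x.1 [] = 0 → y.1 [] = 0 → z.1 [] = 0 →
      dbr (dbr x y) z + dbr (dbr y z) x + dbr (dbr z x) y = 0) := by
  have hdbr : dbr = derivedBracket bracketGHom postLHom := rfl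
  rw [hdbr]
  exact ⟨fun x y _ _ => derivedBracket_swap bracketG_swap x y,
    fun x y z _ _ _ => derivedBracket_jacobi bracketG_swap bracketG_jacobi postL_bracketG_left
      postL_bracketG_right x y z⟩
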